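/- arXiv:alg-geom/9206005 — 2 statements merged into one kernel-verified Lean document; each statement's English description precedes it below -/
import Mathlib

section
/- Let Γ be a minimal elliptic weighted graph on vertex set I and let Γ' be a minimal elliptic weighted graph on I' which is a subgraph of Γ with Γ' ≠ Γ, and assume that the weights and genera agree on I': w'_i = w_i and g'_i = g_i for all i ∈ I'. Then the log discrepancies satisfy a_i ≤ a'_i for every i ∈ I' (equivalently b_i ≥ b'_i). If moreover Γ is connected and is not a Du Val graph, then a_i < a'_i for every i ∈ I'. -/
open Finset

/-- A weighted graph: a finite vertex set `Fin n`, genera `g`, a symmetric integer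
intersection matrix `M` with nonnegative off-diagonal entries and diagonal entries `≤ -1`
(the weight of vertex `i` is `-M i i`), and an external part consisting of `s` external
components with rational coefficients `0 < b j ≤ 1` and intersection numbers `t j i`. -/
structure WGraph where
  n : ℕ
  npos : 0 < n
  M : Matrix (Fin n) (Fin n) ℤ
  g : Fin n → ℕ
  s : ℕ
  b : Fin s → ℚ
  t : Fin s → Fin n → ℕ
  symm : ∀ i k, M i k = M k i
  offdiag_nonneg : ∀ i k, i ≠ k → 0 ≤ M i k
  diag_le : ∀ i, M i i ≤ -1
  b_pos : ∀ j, 0 < b j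
  b_le_one : ∀ j, b j ≤ 1

namespace WGraph

/-- The external contribution `c_i = ∑_j b_j t_{ji}`. -/
def extc (Γ : WGraph) (i : Fin Γ.n) : ℚ := ∑ j, Γ.b j * (Γ.t j i : ℚ)

/-- `Γ` is elliptic: its intersection matrix is negative definite. -/
def Elliptic (Γ : WGraph) : Prop :=
  ∀ v : Fin Γ.n → ℝ, v ≠ 0 → ∑ i, ∑ k, v i * (Γ.M i k : ℝ) * v k < 0

/-- `Γ` is minimal: no vertex of genus `0` and weight `1`. -/
def IsMinimal (Γ : WGraph) : Prop := ∀ i, ¬ (Γ.g i = 0 ∧ Γ.M i i = -1)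

/-- `Γ` is connected: the graph with an edge `{i,k}` whenever `M i k > 0` is connected. -/
def Connected (Γ : WGraph) : Prop :=
  (SimpleGraph.fromRel (fun i k : Fin Γ.n => 0 < Γ.M i k)).Connected

/-- `a` is the (unique, when `M` is invertible) system of log discrepancies of `Γ`:
`∑_i a_i M_{ik} = (2 g_k − 2 − M_{kk}) + c_k + ∑_i M_{ik}` for all `k`. -/
def IsDiscr (Γ : WGraph) (a : Fin Γ.n → ℝ) : Prop :=
  ∀ k, ∑ i, a i * (Γ.M i k : ℝ) =
    (2 * (Γ.g k : ℝ) - 2 - (Γ.M k k : ℝ)) + (Γ.extc k : ℝ) + ∑ i, (Γ.M i k : ℝ)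

/-- `Γ` is a Du Val graph: all genera `0`, all weights `2`, empty external contribution. -/
def DuVal (Γ : WGraph) : Prop :=
  ∀ i, Γ.g i = 0 ∧ Γ.M i i = -2 ∧ Γ.extc i = 0

/-- The minimal log discrepancy `pld` of a system of log discrepancies `a`. -/
def pld (Γ : WGraph) (a : Fin Γ.n → ℝ) : ℝ :=
  Finset.univ.inf' ⟨⟨0, Γ.npos⟩, Finset.mem_univ _⟩ a

/-- `Γ'` is a subgraph of `Γ` via the injection `e` of vertex sets:
off-diagonal entries, weights, genera and external contributions of `Γ'` are dominated by
the corresponding ones of `Γ`. -/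
def SubgraphVia (Γ' Γ : WGraph) (e : Fin Γ'.n → Fin Γ.n) : Prop :=
  Function.Injective e ∧
  (∀ i k : Fin Γ'.n, i ≠ k → Γ'.M i k ≤ Γ.M (e i) (e k)) ∧
  (∀ i, Γ.M (e i) (e i) ≤ Γ'.M i i) ∧
  (∀ i, Γ'.g i ≤ Γ.g (e i)) ∧
  (∀ i, Γ'.extc i ≤ Γ.extc (e i))

/-- The subgraph `Γ'` (via `e`) differs from `Γ`. -/
def ProperVia (Γ' Γ : WGraph) (e : Fin Γ'.n → Fin Γ.n) : Prop :=
  ¬ (Function.Surjective e ∧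
     (∀ i k : Fin Γ'.n, Γ'.M i k = Γ.M (e i) (e k)) ∧
     (∀ i, Γ'.g i = Γ.g (e i)) ∧
     (∀ i, Γ'.extc i = Γ.extc (e i)))

end WGraph

/-- Order on coefficient tuples: `B ≤ B'` iff `B` is at least as long as `B'` and
coordinatewise `B j ≤ B' j` on the common indices. -/
def TupleLE {α : Type*} [LE α] {s t : ℕ} (B : Fin s → α) (B' : Fin t → α) : Prop :=
  ∃ h : t ≤ s, ∀ j : Fin t, B (Fin.castLE h j) ≤ B' j

/-- Strict order on coefficient tuples: `B < B'` iff `B ≤ B'` and moreover `B` is strictly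
longer or some coordinate inequality is strict. -/
def TupleLT {α : Type*} [Preorder α] {s t : ℕ} (B : Fin s → α) (B' : Fin t → α) : Prop :=
  TupleLE B B' ∧ (t < s ∨ ∃ h : t ≤ s, ∃ j : Fin t, B (Fin.castLE h j) < B' j)

/-!
The codiscrepancies `b = 1 - a` satisfy `b M ≤ 0` coordinatewise, since minimality
gives `M_kk ≤ 2 g_k - 2`. For a negative definite matrix with nonnegative off-diagonal entries,
`x M ≤ 0` forces `x ≥ 0`, so `b ≥ 0`. Subtracting the defining equations of `Γ` and `Γ'`, the
difference `d = a' - a ∘ e` satisfies `d M' ≤ 0`: each defect is a codiscrepancy of `Γ` times a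
nonnegative amount by which `Γ` exceeds `Γ'`. Hence `d ≥ 0`. If `d` vanishes at a vertex, then
`(d M')_k = 0` kills every defect there; when `Γ` is connected and not Du Val all
codiscrepancies are positive, so `Γ'` coincides with `Γ` around that vertex and the zero set of
`d` spreads along `Γ`, which forces `Γ' = Γ`.
-/

open Matrix

theorem SimpleGraph.Preconnected.forall_of_adj_imp {V : Type*} {G : SimpleGraph V}
    (hG : G.Preconnected) {P : V → Prop} (hP : ∀ ⦃u v⦄, G.Adj u v → P u → P v)
    {u : V} (hu : P u) (v : V) : P v := by
  obtain ⟨w⟩ := hG u v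
  induction w with
  | nil => exact hu
  | cons h _ ih => exact ih (hP h hu)

lemma posPart_mul_negPart_eq_zero {α : Type*} [Ring α] [LinearOrder α] [IsOrderedRing α]
    (x : α) : x⁺ * x⁻ = 0 := by
  rcases le_total 0 x with h | h
  · simp [negPart_eq_zero.2 h]
  · simp [posPart_eq_zero.2 h]

section MetzlerNegDef

variable {ι : Type*} [Fintype ι] {N : Matrix ι ι ℝ} {x : ι → ℝ}

theorem nonneg_of_vecMul_nonpos (hN : ∀ v : ι → ℝ, v ≠ 0 → ∑ i, ∑ k, v i * N i k * v k < 0)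
    (hoff : ∀ i k, i ≠ k → 0 ≤ N i k) (hx : x ᵥ* N ≤ 0) : 0 ≤ x := by
  -- `x⁺` and `x⁻` have disjoint supports, so `x⁻ N x⁻ = x⁺ N x⁻ - (x N) x⁻ ≥ 0`.
  have hsplit : ∑ i, ∑ k, x⁻ i * N i k * x⁻ k
      = ∑ i, ∑ k, x⁺ i * N i k * x⁻ k - ∑ k, (x ᵥ* N) k * x⁻ k := by
    have hcomm : ∑ k, (x ᵥ* N) k * x⁻ k = ∑ i, ∑ k, x i * N i k * x⁻ k := by
      simp only [vecMul, dotProduct, Finset.sum_mul]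
      exact Finset.sum_comm
    rw [hcomm, ← Finset.sum_sub_distrib]
    refine Finset.sum_congr rfl fun i _ => ?_
    rw [← Finset.sum_sub_distrib]
    refine Finset.sum_congr rfl fun k _ => ?_
    have hxi : x i = x⁺ i - x⁻ i := by rw [← Pi.sub_apply, posPart_sub_negPart]
    rw [hxi]
    ring
  have hcross : 0 ≤ ∑ i, ∑ k, x⁺ i * N i k * x⁻ k := by
    refine Finset.sum_nonneg fun i _ => Finset.sum_nonneg fun k _ => ?_
    rcases eq_or_ne i k with rfl | hik
    · rw [mul_right_comm, Pi.posPart_apply, Pi.negPart_apply, posPart_mul_negPart_eq_zero,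
        zero_mul]
    · exact mul_nonneg (mul_nonneg (posPart_nonneg _) (hoff i k hik)) (negPart_nonneg _)
  have hxq : ∑ k, (x ᵥ* N) k * x⁻ k ≤ 0 :=
    Finset.sum_nonpos fun k _ => mul_nonpos_of_nonpos_of_nonneg (hx k) (negPart_nonneg _)
  have hq : x⁻ = 0 := by
    by_contra hq
    linarith [hN x⁻ hq]
  exact negPart_eq_zero.1 hq

theorem vecMul_apply_nonneg_of_apply_eq_zero (hoff : ∀ i k, i ≠ k → 0 ≤ N i k) (hx0 : 0 ≤ x)
    {k : ι} (hk : x k = 0) : 0 ≤ (x ᵥ* N) k :=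
  Finset.sum_nonneg fun i _ => by
    rcases eq_or_ne i k with rfl | hik
    · simp [hk]
    · exact mul_nonneg (hx0 i) (hoff i k hik)

theorem apply_eq_zero_of_vecMul_nonpos (hoff : ∀ i k, i ≠ k → 0 ≤ N i k) (hx0 : 0 ≤ x)
    (hx : x ᵥ* N ≤ 0) {i k : ι} (hk : x k = 0) (hik : 0 < N i k) : x i = 0 := by
  have hterms : ∀ j ∈ univ, 0 ≤ x j * N j k := fun j _ => by
    rcases eq_or_ne j k with rfl | hjk
    · simp [hk]
    · exact mul_nonneg (hx0 j) (hoff j k hjk)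
  have hsum : ∑ j, x j * N j k = 0 :=
    le_antisymm (hx k) (vecMul_apply_nonneg_of_apply_eq_zero hoff hx0 hk)
  exact ((mul_eq_zero.1 ((sum_eq_zero_iff_of_nonneg hterms).1 hsum i (mem_univ i))).resolve_right
    hik.ne')

theorem eq_zero_of_vecMul_nonpos_of_preconnected {G : SimpleGraph ι} (hG : G.Preconnected)
    (hadj : ∀ i k, G.Adj i k → 0 < N i k) (hoff : ∀ i k, i ≠ k → 0 ≤ N i k) (hx0 : 0 ≤ x)
    (hx : x ᵥ* N ≤ 0) {k : ι} (hk : x k = 0) : x = 0 :=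
  funext <| hG.forall_of_adj_imp
    (fun _ i hki hk => apply_eq_zero_of_vecMul_nonpos hoff hx0 hx hk (hadj i _ hki.symm)) hk

end MetzlerNegDef

lemma eq_zero_of_sum_mul_eq_zero {ι : Type*} {s : Finset ι} {w f : ι → ℝ}
    (hw : ∀ i ∈ s, 0 < w i) (hf : ∀ i ∈ s, 0 ≤ f i) (h : ∑ i ∈ s, w i * f i = 0) :
    ∀ i ∈ s, f i = 0 := fun i hi =>
  ((mul_eq_zero.1 ((sum_eq_zero_iff_of_nonneg fun j hj => mul_nonneg (hw j hj).le (hf j hj)).1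
    h i hi)).resolve_left (hw i hi).ne')

lemma Function.Injective.sum_comp_add_sum_compl {α β M : Type*} [Fintype α] [Fintype β]
    [DecidableEq β] [AddCommMonoid M] {e : α → β} (he : Function.Injective e) (f : β → M) :
    ∑ i, f (e i) + ∑ j ∈ (univ.image e)ᶜ, f j = ∑ j, f j := by
  rw [← sum_add_sum_compl (univ.image e) f, sum_image fun x _ y _ h => he h]

namespace WGraph

section

variable (Γ : WGraph)

def realM : Matrix (Fin Γ.n) (Fin Γ.n) ℝ := Γ.M.map (↑)

@[simp] lemma realM_apply (i k : Fin Γ.n) : Γ.realM i k = Γ.M i k := rfl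

lemma realM_offdiag_nonneg (i k : Fin Γ.n) (h : i ≠ k) : 0 ≤ Γ.realM i k := by
  simpa using Γ.offdiag_nonneg i k h

lemma realM_pos_of_adj {i k : Fin Γ.n}
    (h : (SimpleGraph.fromRel fun i k : Fin Γ.n => 0 < Γ.M i k).Adj i k) : 0 < Γ.realM i k := by
  obtain ⟨-, h | h⟩ := (SimpleGraph.fromRel_adj _ _ _).1 h
  · simpa using h
  · simpa [Γ.symm i k] using h

lemma extc_nonneg (i : Fin Γ.n) : 0 ≤ Γ.extc i :=
  sum_nonneg fun j _ => mul_nonneg (Γ.b_pos j).le (Nat.cast_nonneg _)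

variable {Γ}

lemma IsMinimal.diag_le (hmin : Γ.IsMinimal) (k : Fin Γ.n) : Γ.M k k ≤ 2 * (Γ.g k : ℤ) - 2 := by
  have := Γ.diag_le k
  have := hmin k
  omega

variable {a : Fin Γ.n → ℝ}

lemma IsDiscr.one_sub_vecMul_apply (ha : Γ.IsDiscr a) (k : Fin Γ.n) :
    ((1 - a) ᵥ* Γ.realM) k = 2 - 2 * (Γ.g k : ℝ) + Γ.M k k - Γ.extc k := by
  change ∑ i, (1 - a i) * (Γ.M i k : ℝ) = _
  simp only [sub_mul, one_mul, sum_sub_distrib, ha k]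
  ring

lemma IsDiscr.one_sub_vecMul_nonpos (hmin : Γ.IsMinimal) (ha : Γ.IsDiscr a) :
    (1 - a) ᵥ* Γ.realM ≤ 0 := fun k => by
  have hM : (Γ.M k k : ℝ) ≤ 2 * (Γ.g k : ℝ) - 2 := by exact_mod_cast hmin.diag_le k
  have hc : (0 : ℝ) ≤ Γ.extc k := by exact_mod_cast Γ.extc_nonneg k
  rw [Pi.zero_apply, ha.one_sub_vecMul_apply k]
  linarith

lemma IsDiscr.le_one (hmin : Γ.IsMinimal) (hell : Γ.Elliptic) (ha : Γ.IsDiscr a) (i : Fin Γ.n) :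
    a i ≤ 1 :=
  sub_nonneg.1 (nonneg_of_vecMul_nonpos hell Γ.realM_offdiag_nonneg
    (ha.one_sub_vecMul_nonpos hmin) i)

lemma IsDiscr.lt_one (hmin : Γ.IsMinimal) (hell : Γ.Elliptic) (hconn : Γ.Connected)
    (hDV : ¬ Γ.DuVal) (ha : Γ.IsDiscr a) (i : Fin Γ.n) : a i < 1 := by
  refine (ha.le_one hmin hell i).lt_of_ne fun hi => hDV fun k => ?_
  have hb : 1 - a = 0 :=
    eq_zero_of_vecMul_nonpos_of_preconnected hconn.preconnected (fun _ _ => Γ.realM_pos_of_adj)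
      Γ.realM_offdiag_nonneg (fun j => sub_nonneg.2 (ha.le_one hmin hell j))
      (ha.one_sub_vecMul_nonpos hmin) (k := i) (by simp [hi])
  have hk := ha.one_sub_vecMul_apply k
  rw [hb, zero_vecMul, Pi.zero_apply] at hk
  have hM := hmin.diag_le k
  have hc : (0 : ℝ) ≤ Γ.extc k := by exact_mod_cast Γ.extc_nonneg k
  have hc0 : (Γ.extc k : ℝ) = 0 := by
    have : (Γ.M k k : ℝ) ≤ 2 * (Γ.g k : ℝ) - 2 := by exact_mod_cast hM
    linarith
  have hMg : Γ.M k k = 2 * (Γ.g k : ℤ) - 2 := by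
    have : (Γ.M k k : ℝ) = 2 * (Γ.g k : ℝ) - 2 := by linarith
    exact_mod_cast this
  have := Γ.diag_le k
  exact ⟨by omega, by omega, by exact_mod_cast hc0⟩

end

section

variable {Γ Γ' : WGraph} {e : Fin Γ'.n → Fin Γ.n} {a : Fin Γ.n → ℝ} {a' : Fin Γ'.n → ℝ}

lemma realM_nonneg_of_notMem_image {j : Fin Γ.n} (hj : j ∉ univ.image e) (k : Fin Γ'.n) :
    0 ≤ Γ.realM j (e k) :=
  Γ.realM_offdiag_nonneg _ _ fun h => hj (h ▸ mem_image_of_mem e (mem_univ k))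

lemma SubgraphVia.realM_sub_nonneg (hsub : Γ'.SubgraphVia Γ e)
    (hw : ∀ i, Γ'.M i i = Γ.M (e i) (e i)) (i k : Fin Γ'.n) :
    0 ≤ Γ.realM (e i) (e k) - Γ'.realM i k := by
  rcases eq_or_ne i k with rfl | hik
  · simp [hw i]
  · simpa using hsub.2.1 i k hik

lemma sub_comp_vecMul_apply_eq (hinj : Function.Injective e)
    (hw : ∀ i, Γ'.M i i = Γ.M (e i) (e i)) (hg : ∀ i, Γ'.g i = Γ.g (e i))
    (ha : Γ.IsDiscr a) (ha' : Γ'.IsDiscr a') (k : Fin Γ'.n) :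
    ((a' - a ∘ e) ᵥ* Γ'.realM) k = (Γ'.extc k - Γ.extc (e k) : ℝ)
      - ∑ i, (1 - a (e i)) * (Γ.realM (e i) (e k) - Γ'.realM i k)
      - ∑ j ∈ (univ.image e)ᶜ, (1 - a j) * Γ.realM j (e k) := by
  have hsplit := hinj.sum_comp_add_sum_compl (M := ℝ)
  have hΓ := ha (e k)
  rw [← hsplit, ← hsplit] at hΓ
  change ∑ i, (a' i - a (e i)) * (Γ'.M i k : ℝ) = _
  simp only [realM_apply, sub_mul, mul_sub, one_mul, sum_sub_distrib, ha' k, hw k, hg k] at hΓ ⊢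
  linarith

lemma sub_comp_vecMul_nonpos (hsub : Γ'.SubgraphVia Γ e)
    (hw : ∀ i, Γ'.M i i = Γ.M (e i) (e i)) (hg : ∀ i, Γ'.g i = Γ.g (e i))
    (hle : ∀ j, a j ≤ 1) (ha : Γ.IsDiscr a) (ha' : Γ'.IsDiscr a') :
    (a' - a ∘ e) ᵥ* Γ'.realM ≤ 0 := fun k => by
  have hc : (Γ'.extc k : ℝ) ≤ Γ.extc (e k) := by exact_mod_cast hsub.2.2.2.2 k
  have hinner : 0 ≤ ∑ i, (1 - a (e i)) * (Γ.realM (e i) (e k) - Γ'.realM i k) :=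
    sum_nonneg fun i _ => mul_nonneg (sub_nonneg.2 (hle _)) (hsub.realM_sub_nonneg hw i k)
  have houter : 0 ≤ ∑ j ∈ (univ.image e)ᶜ, (1 - a j) * Γ.realM j (e k) :=
    sum_nonneg fun j hj =>
      mul_nonneg (sub_nonneg.2 (hle j)) (realM_nonneg_of_notMem_image (mem_compl.1 hj) k)
  rw [sub_comp_vecMul_apply_eq hsub.1 hw hg ha ha' k, Pi.zero_apply]
  linarith

lemma eq_of_sub_comp_vecMul_eq_zero (hsub : Γ'.SubgraphVia Γ e)
    (hw : ∀ i, Γ'.M i i = Γ.M (e i) (e i)) (hg : ∀ i, Γ'.g i = Γ.g (e i))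
    (hlt : ∀ j, a j < 1) (ha : Γ.IsDiscr a) (ha' : Γ'.IsDiscr a') {k : Fin Γ'.n}
    (hk : ((a' - a ∘ e) ᵥ* Γ'.realM) k = 0) :
    Γ'.extc k = Γ.extc (e k) ∧ (∀ i, Γ'.M i k = Γ.M (e i) (e k)) ∧
      ∀ j ∉ univ.image e, Γ.M j (e k) = 0 := by
  have hc : (Γ'.extc k : ℝ) ≤ Γ.extc (e k) := by exact_mod_cast hsub.2.2.2.2 k
  have hb : ∀ j, 0 < 1 - a j := fun j => sub_pos.2 (hlt j)
  have hM : ∀ j ∈ (univ.image e)ᶜ, 0 ≤ Γ.realM j (e k) := fun j hj =>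
    realM_nonneg_of_notMem_image (mem_compl.1 hj) k
  have hinner : 0 ≤ ∑ i, (1 - a (e i)) * (Γ.realM (e i) (e k) - Γ'.realM i k) :=
    sum_nonneg fun i _ => mul_nonneg (hb _).le (hsub.realM_sub_nonneg hw i k)
  have houter : 0 ≤ ∑ j ∈ (univ.image e)ᶜ, (1 - a j) * Γ.realM j (e k) :=
    sum_nonneg fun j hj => mul_nonneg (hb j).le (hM j hj)
  rw [sub_comp_vecMul_apply_eq hsub.1 hw hg ha ha' k] at hk
  refine ⟨by exact_mod_cast (by linarith : (Γ'.extc k : ℝ) = Γ.extc (e k)), fun i => ?_,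
    fun j hj => ?_⟩
  · have := eq_zero_of_sum_mul_eq_zero (fun i _ => hb (e i))
      (fun i _ => hsub.realM_sub_nonneg hw i k) (by linarith) i (mem_univ i)
    simp only [realM_apply, sub_eq_zero] at this
    exact_mod_cast this.symm
  · simpa using eq_zero_of_sum_mul_eq_zero (fun j _ => hb j) hM (by linarith) j (mem_compl.2 hj)

lemma not_properVia_of_discr_eq (hsub : Γ'.SubgraphVia Γ e)
    (hw : ∀ i, Γ'.M i i = Γ.M (e i) (e i)) (hg : ∀ i, Γ'.g i = Γ.g (e i))
    (hconn : Γ.Connected) (hlt : ∀ j, a j < 1) (ha : Γ.IsDiscr a) (ha' : Γ'.IsDiscr a')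
    (hd0 : 0 ≤ a' - a ∘ e) (hdM : (a' - a ∘ e) ᵥ* Γ'.realM ≤ 0) {i₀ : Fin Γ'.n}
    (hi₀ : a' i₀ = a (e i₀)) : ¬ Γ'.ProperVia Γ e := by
  have hsat : ∀ k, (a' - a ∘ e) k = 0 → _ := fun k hk =>
    eq_of_sub_comp_vecMul_eq_zero hsub hw hg hlt ha ha' (le_antisymm (hdM k)
      (vecMul_apply_nonneg_of_apply_eq_zero Γ'.realM_offdiag_nonneg hd0 hk))
  have hclosed : ∀ ⦃j j'⦄, (SimpleGraph.fromRel fun i k : Fin Γ.n => 0 < Γ.M i k).Adj j j' →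
      (∃ k, e k = j ∧ (a' - a ∘ e) k = 0) → ∃ i, e i = j' ∧ (a' - a ∘ e) i = 0 := by
    rintro j j' hadj ⟨k, rfl, hk⟩
    obtain ⟨-, hMk, hout⟩ := hsat k hk
    have hpos := Γ.realM_pos_of_adj hadj.symm
    have hj' : j' ∈ univ.image e := by
      by_contra hj'
      simp [hout j' hj'] at hpos
    obtain ⟨i, -, rfl⟩ := mem_image.1 hj'
    refine ⟨i, rfl, apply_eq_zero_of_vecMul_nonpos Γ'.realM_offdiag_nonneg hd0 hdM hk ?_⟩
    simpa [hMk i] using hpos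
  have hall := hconn.preconnected.forall_of_adj_imp hclosed ⟨i₀, rfl, by simp [hi₀]⟩
  have hd : ∀ k, (a' - a ∘ e) k = 0 := fun k => by
    obtain ⟨i, hi, hz⟩ := hall (e k)
    rwa [hsub.1 hi] at hz
  exact fun hproper => hproper ⟨fun j => (hall j).imp fun _ => And.left,
    fun i k => (hsat k (hd k)).2.1 i, hg, fun k => (hsat k (hd k)).1⟩

end

end WGraph

theorem subgraph_discrepancy_comparison_general (Γ Γ' : WGraph) (e : Fin Γ'.n → Fin Γ.n)
    (hsub : WGraph.SubgraphVia Γ' Γ e) (hproper : WGraph.ProperVia Γ' Γ e)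
    (hmin : Γ.IsMinimal) (hell : Γ.Elliptic) (hell' : Γ'.Elliptic)
    (hw : ∀ i, Γ'.M i i = Γ.M (e i) (e i)) (hg : ∀ i, Γ'.g i = Γ.g (e i))
    (a : Fin Γ.n → ℝ) (ha : Γ.IsDiscr a) (a' : Fin Γ'.n → ℝ) (ha' : Γ'.IsDiscr a') :
    (∀ i, a (e i) ≤ a' i) ∧
    ((Γ.Connected ∧ ¬ Γ.DuVal) → ∀ i, a (e i) < a' i) := by
  have hdM := WGraph.sub_comp_vecMul_nonpos hsub hw hg (ha.le_one hmin hell) ha ha'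
  have hd0 : 0 ≤ a' - a ∘ e := nonneg_of_vecMul_nonpos hell' Γ'.realM_offdiag_nonneg hdM
  have hle : ∀ i, a (e i) ≤ a' i := fun i => sub_nonneg.1 (hd0 i)
  refine ⟨hle, fun ⟨hconn, hDV⟩ i => (hle i).lt_of_ne fun hi => ?_⟩
  exact WGraph.not_properVia_of_discr_eq hsub hw hg hconn (ha.lt_one hmin hell hconn hDV) ha ha'
    hd0 hdM hi.symm hproper

/-- Let `Γ'` be a proper subgraph of the minimal elliptic graph `Γ`
(both minimal elliptic), with the same weights and genera on the common vertices. Then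
`a_i ≤ a'_i` on the common vertices; if moreover `Γ` is connected and not Du Val, then
`a_i < a'_i`. -/
theorem subgraph_discrepancy_comparison (Γ Γ' : WGraph) (e : Fin Γ'.n → Fin Γ.n)
    (hsub : WGraph.SubgraphVia Γ' Γ e) (hproper : WGraph.ProperVia Γ' Γ e)
    (hmin : Γ.IsMinimal) (hell : Γ.Elliptic) (hmin' : Γ'.IsMinimal) (hell' : Γ'.Elliptic)
    (hw : ∀ i, Γ'.M i i = Γ.M (e i) (e i)) (hg : ∀ i, Γ'.g i = Γ.g (e i))
    (a : Fin Γ.n → ℝ) (ha : Γ.IsDiscr a) (a' : Fin Γ'.n → ℝ) (ha' : Γ'.IsDiscr a') :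
    (∀ i, a (e i) ≤ a' i) ∧
    ((Γ.Connected ∧ ¬ Γ.DuVal) → ∀ i, a (e i) < a' i) :=
  subgraph_discrepancy_comparison_general Γ Γ' e hsub hproper hmin hell hell' hw hg a ha a' ha'
end

section
/- Let Γ be a minimal elliptic weighted graph on vertex set I which is log canonical (all log discrepancies a_i ≥ 0), and let Γ' be a minimal elliptic weighted graph on I' which is a subgraph of Γ (in particular the weights may differ, with w'_i ≤ w_i). Then the log discrepancies satisfy a_i ≤ a'_i for every i ∈ I'. -/
open Finset

/-- Maximum principle for negative definite matrices with nonnegative off-diagonal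
entries: if `∑_i d_i M_{ik} ≤ 0` for all `k`, then `d ≥ 0`. -/
private lemma maxPrinciple {n : ℕ} (M : Matrix (Fin n) (Fin n) ℤ)
    (hoff : ∀ i k : Fin n, i ≠ k → 0 ≤ M i k)
    (hnd : ∀ v : Fin n → ℝ, v ≠ 0 → ∑ i, ∑ k, v i * (M i k : ℝ) * v k < 0)
    (d : Fin n → ℝ) (hd : ∀ k, ∑ i, d i * (M i k : ℝ) ≤ 0) :
    ∀ i, 0 ≤ d i := by
  by_contra hcon
  push_neg at hcon
  obtain ⟨i0, hi0⟩ := hcon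
  set v : Fin n → ℝ := fun i => min (d i) 0 with hv
  have hvle : ∀ i, v i ≤ 0 := fun i => min_le_right _ _
  have hpnn : ∀ i, 0 ≤ d i - v i := by
    intro i; simp [hv]
  have hpv : ∀ i, (d i - v i) * v i = 0 := by
    intro i
    rcases le_total (d i) 0 with h | h
    · simp [hv, min_eq_left h]
    · simp [hv, min_eq_right h]
  have hvne : v ≠ 0 := by
    intro h
    have h0 : v i0 = 0 := congrFun h i0
    have h1 : v i0 = d i0 := by simp [hv, min_eq_left hi0.le]
    linarith
  have hneg := hnd v hvne
  have hkey : ∀ k, 0 ≤ ∑ i, v i * (M i k : ℝ) * v k := by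
    intro k
    have h1 : ∑ i, v i * (M i k : ℝ) * v k
        = (∑ i, d i * (M i k : ℝ)) * v k
          - ∑ i, (d i - v i) * (M i k : ℝ) * v k := by
      rw [Finset.sum_mul, ← Finset.sum_sub_distrib]
      exact Finset.sum_congr rfl fun i _ => by ring
    have h2 : 0 ≤ (∑ i, d i * (M i k : ℝ)) * v k := by
      have := mul_nonneg (neg_nonneg.2 (hd k)) (neg_nonneg.2 (hvle k))
      nlinarith
    have h3 : ∑ i, (d i - v i) * (M i k : ℝ) * v k ≤ 0 := by
      apply Finset.sum_nonpos
      intro i _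
      rcases eq_or_ne i k with rfl | hik
      · have he : (d i - v i) * (M i i : ℝ) * v i = (M i i : ℝ) * ((d i - v i) * v i) := by
          ring
        rw [he, hpv i, mul_zero]
      · have hM : (0:ℝ) ≤ (M i k : ℝ) := by exact_mod_cast hoff i k hik
        exact mul_nonpos_of_nonneg_of_nonpos (mul_nonneg (hpnn i) hM) (hvle k)
    rw [h1]; linarith
  have hfin : 0 ≤ ∑ i, ∑ k, v i * (M i k : ℝ) * v k := by
    rw [Finset.sum_comm]
    exact Finset.sum_nonneg fun k _ => hkey k
  linarith

private lemma extc_nonneg (Γ : WGraph) (i : Fin Γ.n) : (0:ℝ) ≤ (Γ.extc i : ℝ) := by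
  have h : (0:ℚ) ≤ Γ.extc i :=
    Finset.sum_nonneg fun j _ => mul_nonneg (Γ.b_pos j).le (by positivity)
  exact_mod_cast h

/-- For minimal elliptic graphs, log discrepancies are at most `1`. -/
private lemma discr_le_one (Γ : WGraph) (hmin : Γ.IsMinimal) (hell : Γ.Elliptic)
    (a : Fin Γ.n → ℝ) (ha : Γ.IsDiscr a) : ∀ i, a i ≤ 1 := by
  have h := maxPrinciple Γ.M Γ.offdiag_nonneg hell (fun i => 1 - a i) ?_
  · intro i; linarith [h i]
  intro k
  have h1 : ∑ i, (1 - a i) * (Γ.M i k : ℝ)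
      = ∑ i, (Γ.M i k : ℝ) - ∑ i, a i * (Γ.M i k : ℝ) := by
    rw [← Finset.sum_sub_distrib]
    exact Finset.sum_congr rfl fun i _ => by ring
  rw [h1, ha k]
  have hc := extc_nonneg Γ k
  have hmk : (Γ.M k k : ℝ) ≤ -1 := by exact_mod_cast Γ.diag_le k
  rcases Nat.eq_zero_or_pos (Γ.g k) with hg | hg
  · have hne : Γ.M k k ≠ -1 := fun h' => hmin k ⟨hg, h'⟩
    have h2 : Γ.M k k ≤ -2 := by have := Γ.diag_le k; omega
    have h2' : (Γ.M k k : ℝ) ≤ -2 := by exact_mod_cast h2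
    have hgr : (Γ.g k : ℝ) = 0 := by exact_mod_cast hg
    linarith
  · have hgr : (1:ℝ) ≤ (Γ.g k : ℝ) := by exact_mod_cast hg
    linarith

/-- Let `Γ` be a minimal elliptic log canonical weighted graph and `Γ'` a
minimal elliptic subgraph of it (weights may differ). Then `a_i ≤ a'_i` on the common
vertices. -/
theorem subgraph_discrepancy_comparison_lc (Γ Γ' : WGraph) (e : Fin Γ'.n → Fin Γ.n)
    (hsub : WGraph.SubgraphVia Γ' Γ e)
    (hmin : Γ.IsMinimal) (hell : Γ.Elliptic) (hmin' : Γ'.IsMinimal) (hell' : Γ'.Elliptic)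
    (a : Fin Γ.n → ℝ) (ha : Γ.IsDiscr a) (hlc : ∀ i, 0 ≤ a i)
    (a' : Fin Γ'.n → ℝ) (ha' : Γ'.IsDiscr a') :
    ∀ i, a (e i) ≤ a' i := by
  obtain ⟨hinj, hoffle, hdiagle, hgle, hcle⟩ := hsub
  have hle1 := discr_le_one Γ hmin hell a ha
  have key : ∀ k, ∑ i, (a' i - a (e i)) * (Γ'.M i k : ℝ) ≤ 0 := by
    intro k
    have hsplit : ∑ i, (a' i - a (e i)) * (Γ'.M i k : ℝ)
        = ∑ i, a' i * (Γ'.M i k : ℝ) - ∑ i, a (e i) * (Γ'.M i k : ℝ) := by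
      rw [← Finset.sum_sub_distrib]
      exact Finset.sum_congr rfl fun i _ => by ring
    rw [hsplit, ha' k]
    -- Identity for the primed graph: split off the diagonal
    have hPid : ∑ i ∈ univ.erase k, (1 - a (e i)) * (Γ'.M i k : ℝ)
        = (∑ i, (Γ'.M i k : ℝ) - ∑ i, a (e i) * (Γ'.M i k : ℝ))
          - (1 - a (e k)) * (Γ'.M k k : ℝ) := by
      have h4 := Finset.sum_erase_add univ
        (fun i => (1 - a (e i)) * (Γ'.M i k : ℝ)) (mem_univ k)
      have h5 : ∑ i, (1 - a (e i)) * (Γ'.M i k : ℝ)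
          = ∑ i, (Γ'.M i k : ℝ) - ∑ i, a (e i) * (Γ'.M i k : ℝ) := by
        rw [← Finset.sum_sub_distrib]
        exact Finset.sum_congr rfl fun i _ => by ring
      linarith
    -- Identity for the unprimed graph at `e k`
    have hQid : ∑ m ∈ univ.erase (e k), (1 - a m) * (Γ.M m (e k) : ℝ)
        = 2 - 2 * (Γ.g (e k) : ℝ) - (Γ.extc (e k) : ℝ) + a (e k) * (Γ.M (e k) (e k) : ℝ) := by
      have h2 : ∑ m, (1 - a m) * (Γ.M m (e k) : ℝ)
          = ∑ m, (Γ.M m (e k) : ℝ) - ∑ m, a m * (Γ.M m (e k) : ℝ) := by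
        rw [← Finset.sum_sub_distrib]
        exact Finset.sum_congr rfl fun m _ => by ring
      have h3 := ha (e k)
      have h4 := Finset.sum_erase_add univ
        (fun m => (1 - a m) * (Γ.M m (e k) : ℝ)) (mem_univ (e k))
      linarith
    -- Compare the two off-diagonal sums
    have hstep1 : ∑ i ∈ univ.erase k, (1 - a (e i)) * (Γ'.M i k : ℝ)
        ≤ ∑ i ∈ univ.erase k, (1 - a (e i)) * (Γ.M (e i) (e k) : ℝ) := by
      apply Finset.sum_le_sum
      intro i hi
      have hik : i ≠ k := (Finset.mem_erase.1 hi).1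
      have h1 : (Γ'.M i k : ℝ) ≤ (Γ.M (e i) (e k) : ℝ) := by exact_mod_cast hoffle i k hik
      have h2 : 0 ≤ 1 - a (e i) := by linarith [hle1 (e i)]
      exact mul_le_mul_of_nonneg_left h1 h2
    have hstep2 : ∑ i ∈ univ.erase k, (1 - a (e i)) * (Γ.M (e i) (e k) : ℝ)
        ≤ ∑ m ∈ univ.erase (e k), (1 - a m) * (Γ.M m (e k) : ℝ) := by
      rw [← Finset.sum_image (g := e)
        (f := fun m => (1 - a m) * (Γ.M m (e k) : ℝ)) (fun x _ y _ h => hinj h)]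
      apply Finset.sum_le_sum_of_subset_of_nonneg
      · intro m hm
        obtain ⟨i, hi, rfl⟩ := Finset.mem_image.1 hm
        exact Finset.mem_erase.2
          ⟨fun h => (Finset.mem_erase.1 hi).1 (hinj h), mem_univ _⟩
      · intro m hm _
        have hmK : m ≠ e k := (Finset.mem_erase.1 hm).1
        have hM : (0:ℝ) ≤ (Γ.M m (e k) : ℝ) := by exact_mod_cast Γ.offdiag_nonneg m (e k) hmK
        exact mul_nonneg (by linarith [hle1 m]) hM
    have hgk : (Γ'.g k : ℝ) ≤ (Γ.g (e k) : ℝ) := by exact_mod_cast hgle k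
    have hck : ((Γ'.extc k : ℚ) : ℝ) ≤ ((Γ.extc (e k) : ℚ) : ℝ) := by
      exact_mod_cast hcle k
    have hdiagk : a (e k) * (Γ.M (e k) (e k) : ℝ) ≤ a (e k) * (Γ'.M k k : ℝ) := by
      have : (Γ.M (e k) (e k) : ℝ) ≤ (Γ'.M k k : ℝ) := by exact_mod_cast hdiagle k
      exact mul_le_mul_of_nonneg_left this (hlc (e k))
    linarith
  have hfin := maxPrinciple Γ'.M Γ'.offdiag_nonneg hell'
    (fun i => a' i - a (e i)) key
  intro i
  exact sub_nonneg.mp (hfin i)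
end
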